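/- (Bouton's theorem) A position in Nim, given as a finite multiset of pile sizes, is a previous-player win (P-position) if and only if the bitwise XOR (nim-sum) of the pile sizes is zero. Equivalently: if the nim-sum is zero, every move leads to a position with nonzero nim-sum, and if the nim-sum is nonzero, there exists a move to a position with nim-sum zero. -/

import Mathlib

instance : Std.Commutative (α := ℕ) (· ^^^ ·) := ⟨Nat.xor_comm⟩
instance : Std.Associative (α := ℕ) (· ^^^ ·) := ⟨Nat.xor_assoc⟩

/-- The nim-sum (bitwise XOR) of a finite multiset of pile sizes. -/
def nimSum (s : Multiset ℕ) : ℕ := Multiset.fold (· ^^^ ·) 0 s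

/-- A move in Nim: remove a positive number of counters from a single pile,
i.e. replace some pile of size `a` by a pile of size `b < a`. -/
def NimMove (s t : Multiset ℕ) : Prop :=
  ∃ a ∈ s, ∃ b < a, t = b ::ₘ s.erase a

mutual
/-- `PPos s` : `s` is a previous-player win (the player to move loses):
every move leads to a next-player win. -/
inductive PPos : Multiset ℕ → Prop
  | mk (s : Multiset ℕ) : (∀ t, NimMove s t → NPos t) → PPos s

/-- `NPos s` : `s` is a next-player win: some move leads to a previous-player
win. -/
inductive NPos : Multiset ℕ → Prop
  | mk (s t : Multiset ℕ) : NimMove s t → PPos t → NPos s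
end

/-!
Replacing a pile `a` by `b` xors the nim-sum with `a ^^^ b`, which is nonzero since `b ≠ a`: so no
move preserves nim-sum zero. Conversely, if the nim-sum `n` is nonzero, some pile `a` has the
leading bit of `n` set; then `a ^^^ n < a`, and replacing `a` by `a ^^^ n` brings the nim-sum to zero. Since every move decreases the total number of counters, induction on
it shows that the positions of nim-sum zero are exactly the P-positions.
-/

theorem Nat.xor_lt_self_of_testBit {a n i : ℕ} (ha : a.testBit i = true) (hn : n.testBit i = true)
    (hn_high : ∀ j, i < j → n.testBit j = false) : a ^^^ n < a :=
  Nat.lt_of_testBit i (by simp [Nat.testBit_xor, ha, hn]) ha fun j hj => by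
    simp [Nat.testBit_xor, hn_high j hj]

lemma nimSum_zero : nimSum 0 = 0 := rfl

lemma nimSum_cons (b : ℕ) (s : Multiset ℕ) : nimSum (b ::ₘ s) = b ^^^ nimSum s :=
  Multiset.fold_cons_left _ _ _ _

lemma nimSum_cons_erase {a : ℕ} {s : Multiset ℕ} (ha : a ∈ s) (b : ℕ) :
    nimSum (b ::ₘ s.erase a) = b ^^^ a ^^^ nimSum s := by
  rw [← Multiset.cons_erase ha, nimSum_cons a, Multiset.erase_cons_head, nimSum_cons,
    Nat.xor_assoc, Nat.xor_xor_cancel_left]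

lemma exists_mem_testBit_of_testBit_nimSum {i : ℕ} {s : Multiset ℕ}
    (h : (nimSum s).testBit i = true) : ∃ a ∈ s, a.testBit i = true := by
  induction s using Multiset.induction with
  | empty => simp [nimSum_zero] at h
  | cons a s ih =>
    rw [nimSum_cons, Nat.testBit_xor] at h
    cases ha : a.testBit i with
    | true => exact ⟨a, Multiset.mem_cons_self a s, ha⟩
    | false =>
      obtain ⟨c, hc, hci⟩ := ih (by simpa [ha] using h)
      exact ⟨c, Multiset.mem_cons_of_mem hc, hci⟩

lemma NimMove.sum_lt {s t : Multiset ℕ} (h : NimMove s t) : t.sum < s.sum := by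
  obtain ⟨a, ha, b, hb, rfl⟩ := h
  rw [← Multiset.cons_erase ha, Multiset.erase_cons_head, Multiset.sum_cons, Multiset.sum_cons]
  omega

lemma NimMove.nimSum_ne_zero {s t : Multiset ℕ} (h : NimMove s t) (hs : nimSum s = 0) :
    nimSum t ≠ 0 := by
  obtain ⟨a, ha, b, hb, rfl⟩ := h
  rw [nimSum_cons_erase ha, hs, Nat.xor_zero, Ne, Nat.xor_eq_zero_iff]
  exact hb.ne

lemma exists_nimMove_nimSum_eq_zero {s : Multiset ℕ} (hs : nimSum s ≠ 0) :
    ∃ t, NimMove s t ∧ nimSum t = 0 := by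
  obtain ⟨i, hi, hi_high⟩ := Nat.exists_most_significant_bit hs
  obtain ⟨a, ha, hai⟩ := exists_mem_testBit_of_testBit_nimSum hi
  refine ⟨(a ^^^ nimSum s) ::ₘ s.erase a,
    ⟨a, ha, _, Nat.xor_lt_self_of_testBit hai hi hi_high, rfl⟩, ?_⟩
  rw [nimSum_cons_erase ha, Nat.xor_assoc, Nat.xor_self]

lemma pPos_iff {s : Multiset ℕ} : PPos s ↔ ∀ t, NimMove s t → NPos t :=
  ⟨fun ⟨_, h⟩ => h, PPos.mk s⟩

lemma nPos_iff {s : Multiset ℕ} : NPos s ↔ ∃ t, NimMove s t ∧ PPos t :=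
  ⟨fun ⟨_, t, hst, ht⟩ => ⟨t, hst, ht⟩, fun ⟨t, hst, ht⟩ => NPos.mk s t hst ht⟩

theorem pPos_iff_nimSum_eq_zero_and_nPos_iff_nimSum_ne_zero (s : Multiset ℕ) :
    (PPos s ↔ nimSum s = 0) ∧ (NPos s ↔ nimSum s ≠ 0) := by
  have ih : ∀ t, NimMove s t → (PPos t ↔ nimSum t = 0) ∧ (NPos t ↔ nimSum t ≠ 0) :=
    fun t h =>
      have := h.sum_lt
      pPos_iff_nimSum_eq_zero_and_nPos_iff_nimSum_ne_zero t
  constructor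
  · refine pPos_iff.trans ⟨fun h => ?_, fun hs t h => (ih t h).2.2 (h.nimSum_ne_zero hs)⟩
    by_contra hs
    obtain ⟨t, hst, ht⟩ := exists_nimMove_nimSum_eq_zero hs
    exact (ih t hst).2.1 (h t hst) ht
  · refine nPos_iff.trans ⟨fun ⟨t, hst, ht⟩ hs => ?_, fun hs => ?_⟩
    · exact hst.nimSum_ne_zero hs ((ih t hst).1.1 ht)
    · obtain ⟨t, hst, ht⟩ := exists_nimMove_nimSum_eq_zero hs
      exact ⟨t, hst, (ih t hst).1.2 ht⟩
termination_by s.sum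

/-- Bouton's theorem: a Nim position is a P-position iff its nim-sum is zero.
Equivalently, from a position of nim-sum zero every move leads to nonzero
nim-sum, and from a position of nonzero nim-sum some move leads to nim-sum
zero. -/
theorem stmt2 (s : Multiset ℕ) :
    (PPos s ↔ nimSum s = 0) ∧
    (nimSum s = 0 → ∀ t, NimMove s t → nimSum t ≠ 0) ∧
    (nimSum s ≠ 0 → ∃ t, NimMove s t ∧ nimSum t = 0) :=
  ⟨(pPos_iff_nimSum_eq_zero_and_nPos_iff_nimSum_ne_zero s).1,
    fun hs _ h => h.nimSum_ne_zero hs, exists_nimMove_nimSum_eq_zero⟩
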